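/- Let R be a commutative ring, let P be an ℕ-indexed chain complex of R-modules all of whose terms are flat, and let Q be an acyclic ℕ-indexed chain complex of R-modules. Form the first-quadrant double complex whose (i,j)-term is P_i ⊗_R Q_j, with vertical differential d_P ⊗ (−1)^j and horizontal differential 1 ⊗ d_Q. Then the total complex of this double complex (withterms the direct sums along the antidiagonals) is acyclic. -/

import Mathlib

open CategoryTheory CategoryTheory.Limits CategoryTheory.MonoidalCategory

noncomputable section

universe u

variable (R : Type u) [CommRing R]

/-- The first-quadrant double complex with `(i, j)`-term `P_i ⊗ Q_j`; the outer index is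
`j` (the `Q`-direction, with horizontal differential `1 ⊗ d_Q`) and the inner index is `i`
(the `P`-direction, with differential `d_P ⊗ 1`). -/
def tensorBicomplex (P Q : ChainComplex (ModuleCat.{u} R) ℕ) :
    HomologicalComplex₂ (ModuleCat.{u} R) (ComplexShape.down ℕ) (ComplexShape.down ℕ) where
  X j :=
    { X := fun i => P.X i ⊗ Q.X j
      d := fun i i' => P.d i i' ▷ Q.X j
      shape := fun i i' h => by
        show P.d i i' ▷ Q.X j = 0
        rw [P.shape i i' h, MonoidalPreadditive.zero_whiskerRight]
      d_comp_d' := fun i i' i'' _ _ => by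
        show (P.d i i' ▷ Q.X j) ≫ (P.d i' i'' ▷ Q.X j) = 0
        rw [← MonoidalCategory.comp_whiskerRight, P.d_comp_d,
          MonoidalPreadditive.zero_whiskerRight] }
  d j j' :=
    { f := fun i => P.X i ◁ Q.d j j'
      comm' := fun i i' _ => by
        show (P.X i ◁ Q.d j j') ≫ (P.d i i' ▷ Q.X j') =
          (P.d i i' ▷ Q.X j) ≫ (P.X i' ◁ Q.d j j')
        exact MonoidalCategory.whisker_exchange (P.d i i') (Q.d j j') }
  shape j j' h := by
    ext i : 1
    show P.X i ◁ Q.d j j' = 0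
    rw [Q.shape j j' h, MonoidalPreadditive.whiskerLeft_zero]
  d_comp_d' j j' j'' _ _ := by
    ext i : 1
    show (P.X i ◁ Q.d j j') ≫ (P.X i ◁ Q.d j' j'') = 0
    rw [← MonoidalCategory.whiskerLeft_comp, Q.d_comp_d,
      MonoidalPreadditive.whiskerLeft_zero]

instance (P Q : ChainComplex (ModuleCat.{u} R) ℕ) :
    (tensorBicomplex R P Q).HasTotal (ComplexShape.down ℕ) :=
  fun _ => inferInstance

section AuxiliaryLemmas

variable {R}

namespace HomologicalComplex₂

local notation "cℕ" => ComplexShape.down ℕ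

variable (K : HomologicalComplex₂ (ModuleCat.{u} R) cℕ cℕ) [K.HasTotal cℕ]

/-- Projection of the total complex onto a summand. -/
noncomputable def prT (j i n : ℕ) : (K.total cℕ).X n ⟶ (K.X j).X i :=
  K.totalDesc (fun j' i' _ => if h : j' = j ∧ i' = i then eqToHom (by rw [h.1, h.2]) else 0)

lemma ι_prT_self (j i n : ℕ) (h : ComplexShape.π cℕ cℕ cℕ (j, i) = n) :
    K.ιTotal cℕ j i n h ≫ K.prT j i n = 𝟙 _ := by
  simp [prT]

lemma ι_prT_ne (j' i' j i n : ℕ) (h : ComplexShape.π cℕ cℕ cℕ (j', i') = n)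
    (hne : ¬ (j' = j ∧ i' = i)) :
    K.ιTotal cℕ j' i' n h ≫ K.prT j i n = 0 := by
  simp [prT, hne]

lemma prT_ι_self (j i n : ℕ) (h : ComplexShape.π cℕ cℕ cℕ (j, i) = n) (z : (K.X j).X i) :
    K.prT j i n (K.ιTotal cℕ j i n h z) = z :=
  congrArg (fun f => f z) (K.ι_prT_self j i n h)

lemma prT_ιOrZero_self (j i n : ℕ) (h : ComplexShape.π cℕ cℕ cℕ (j, i) = n) (z : (K.X j).X i) :
    K.prT j i n (K.ιTotalOrZero cℕ j i n z) = z := by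
  rw [K.ιTotalOrZero_eq cℕ j i n h, prT_ι_self]

lemma prT_ιOrZero_ne (j' i' j i n : ℕ) (hne : ¬ (j' = j ∧ i' = i)) (z : (K.X j').X i') :
    K.prT j i n (K.ιTotalOrZero cℕ j' i' n z) = 0 := by
  by_cases h : ComplexShape.π cℕ cℕ cℕ (j', i') = n
  · rw [K.ιTotalOrZero_eq cℕ j' i' n h]
    exact congrArg (fun f => f z) (K.ι_prT_ne j' i' j i n h hne)
  · rw [K.ιTotalOrZero_eq_zero cℕ j' i' n h,
      show (0 : ((K.X j').X i' ⟶ (K.total cℕ).X n)) z = 0 from rfl, map_zero]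

lemma sum_prT_ι (n : ℕ) :
    ∑ j ∈ Finset.range (n + 1), K.prT j (n - j) n ≫ K.ιTotalOrZero cℕ j (n - j) n =
      𝟙 ((K.total cℕ).X n) := by
  apply total.hom_ext
  intro j' i' h
  have hj' : j' + i' = n := h
  obtain rfl : i' = n - j' := by omega
  rw [Category.comp_id, Preadditive.comp_sum]
  rw [Finset.sum_eq_single_of_mem j' (Finset.mem_range.2 (by omega))]
  · rw [← Category.assoc, ι_prT_self, Category.id_comp, K.ιTotalOrZero_eq cℕ j' (n - j') n h]
  · intro j hj hne
    rw [← Category.assoc, ι_prT_ne _ _ _ _ _ _ h (fun hc => hne hc.1.symm), Limits.zero_comp]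

lemma total_decomposition (n : ℕ) (x : (K.total cℕ).X n) :
    x = ∑ j ∈ Finset.range (n + 1), K.ιTotalOrZero cℕ j (n - j) n (K.prT j (n - j) n x) := by
  calc x = (𝟙 ((K.total cℕ).X n)) x := rfl
  _ = (∑ j ∈ Finset.range (n + 1), K.prT j (n - j) n ≫ K.ιTotalOrZero cℕ j (n - j) n) x := by
      rw [K.sum_prT_ι n]
  _ = ∑ j ∈ Finset.range (n + 1), (K.prT j (n - j) n ≫ K.ιTotalOrZero cℕ j (n - j) n) x :=
      by
        change ModuleCat.Hom.hom _ x = ∑ j ∈ Finset.range (n + 1), ModuleCat.Hom.hom _ x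
        rw [ModuleCat.hom_sum, LinearMap.sum_apply]
  _ = ∑ j ∈ Finset.range (n + 1), K.ιTotalOrZero cℕ j (n - j) n (K.prT j (n - j) n x) := rfl

lemma ι_d_total (j i n m : ℕ) (h : ComplexShape.π cℕ cℕ cℕ (j, i) = n) (hm : m + 1 = n) :
    K.ιTotal cℕ j i n h ≫ (K.total cℕ).d n m =
      (K.d j (j - 1)).f i ≫ K.ιTotalOrZero cℕ (j - 1) i m +
        ComplexShape.ε₂ cℕ cℕ cℕ (j, i) • ((K.X j).d i (i - 1) ≫ K.ιTotalOrZero cℕ j (i - 1) m) := by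
  rw [total_d, Preadditive.comp_add, ι_D₁, ι_D₂]
  congr 1
  · obtain _ | j := j
    · rw [K.d₁_eq_zero cℕ 0 i m (by simp)]
      have h0 : K.d 0 (0 - 1) = 0 := K.shape _ _ (by simp)
      rw [h0, HomologicalComplex.zero_f, Limits.zero_comp]
    · rw [K.d₁_eq' cℕ (by simp : (ComplexShape.down ℕ).Rel (j+1) j) i m]
      rw [show ComplexShape.ε₁ cℕ cℕ cℕ (j + 1, i) = 1 from rfl, one_smul]
      rfl
  · obtain _ | i := i
    · rw [K.d₂_eq_zero cℕ j 0 m (by simp)]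
      have h0 : (K.X j).d 0 (0 - 1) = 0 := (K.X j).shape _ _ (by simp)
      rw [h0, Limits.zero_comp, smul_zero]
    · rw [K.d₂_eq' cℕ j (by simp : (ComplexShape.down ℕ).Rel (i+1) i) m]
      rfl

lemma d_total_apply (j i n m : ℕ) (h : ComplexShape.π cℕ cℕ cℕ (j, i) = n) (hm : m + 1 = n)
    (z : (K.X j).X i) :
    (K.total cℕ).d n m (K.ιTotal cℕ j i n h z) =
      K.ιTotalOrZero cℕ (j - 1) i m ((K.d j (j - 1)).f i z) +
        ComplexShape.ε₂ cℕ cℕ cℕ (j, i) • K.ιTotalOrZero cℕ j (i - 1) m ((K.X j).d i (i - 1) z) :=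
  congrArg (fun f => f z) (K.ι_d_total j i n m h hm)

lemma map_unitsSmul {M N : ModuleCat.{u} R} (f : M ⟶ N) (u : ℤˣ) (v : M) :
    f (u • v) = u • f v := by
  rw [Units.smul_def, Units.smul_def, map_zsmul]

lemma cycle_comp (n k : ℕ) (hk1 : 1 ≤ k) (hkn : k ≤ n) (x : (K.total cℕ).X n)
    (hx : (K.total cℕ).d n (n - 1) x = 0)
    (hprev : K.prT (k - 1) (n - (k - 1)) n x = 0) :
    (K.d k (k - 1)).f (n - k) (K.prT k (n - k) n x) = 0 := by
  have key : ∀ j ∈ Finset.range (n + 1),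
      K.prT (k - 1) (n - k) (n - 1)
        ((K.total cℕ).d n (n - 1) (K.ιTotalOrZero cℕ j (n - j) n (K.prT j (n - j) n x)))
        = if j = k then (K.d k (k - 1)).f (n - k) (K.prT k (n - k) n x) else 0 := by
    intro j hj
    rw [Finset.mem_range] at hj
    rw [K.ιTotalOrZero_eq cℕ j (n - j) n (show j + (n - j) = n by omega)]
    rw [K.d_total_apply j (n - j) n (n - 1) _ (by omega)]
    rw [map_add, map_unitsSmul]
    by_cases hjk : j = k
    · subst hjk
      rw [if_pos rfl,
        K.prT_ιOrZero_self (j - 1) (n - j) (n - 1) (show (j-1) + (n-j) = n - 1 by omega),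
        K.prT_ιOrZero_ne j (n - j - 1) (j - 1) (n - j) (n - 1) (by omega),
        smul_zero, add_zero]
    · rw [if_neg hjk]
      rw [K.prT_ιOrZero_ne (j - 1) (n - j) (k - 1) (n - k) (n - 1) (by omega)]
      by_cases hjk1 : j = k - 1
      · subst hjk1
        rw [hprev, map_zero, map_zero, map_zero, smul_zero, add_zero]
      · rw [K.prT_ιOrZero_ne j (n - j - 1) (k - 1) (n - k) (n - 1) (by omega)]
        rw [smul_zero, add_zero]
  have h1 : K.prT (k - 1) (n - k) (n - 1) ((K.total cℕ).d n (n - 1) x)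
      = (K.d k (k - 1)).f (n - k) (K.prT k (n - k) n x) := by
    conv_lhs => rw [K.total_decomposition n x]
    rw [map_sum, map_sum, Finset.sum_congr rfl key, Finset.sum_ite_eq' (Finset.range (n + 1)) k]
    rw [if_pos (Finset.mem_range.2 (by omega))]
  rw [hx, map_zero] at h1
  exact h1.symm



lemma prT_d_ι_self (n k : ℕ) (hk : k ≤ n) (w : (K.X (k + 1)).X (n - k)) :
    K.prT k (n - k) n
      ((K.total cℕ).d (n + 1) n
        (K.ιTotal cℕ (k + 1) (n - k) (n + 1) (show (k+1) + (n-k) = n + 1 by omega) w)) =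
      (K.d (k + 1) k).f (n - k) w := by
  rw [K.d_total_apply (k + 1) (n - k) (n + 1) n _ rfl w]
  rw [map_add, map_unitsSmul]
  rw [K.prT_ιOrZero_ne (k + 1) (n - k - 1) k (n - k) n (by omega), smul_zero, add_zero]
  exact K.prT_ιOrZero_self k (n - k) n (show k + (n - k) = n by omega) _

lemma prT_d_ι_lt (n k j : ℕ) (hk : k ≤ n) (hj : j < k) (w : (K.X (k + 1)).X (n - k)) :
    K.prT j (n - j) n
      ((K.total cℕ).d (n + 1) n
        (K.ιTotal cℕ (k + 1) (n - k) (n + 1) (show (k+1) + (n-k) = n + 1 by omega) w)) = 0 := by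
  rw [K.d_total_apply (k + 1) (n - k) (n + 1) n _ rfl w]
  rw [map_add, map_unitsSmul]
  rw [K.prT_ιOrZero_ne (k + 1) (n - k - 1) j (n - j) n (by omega), smul_zero, add_zero]
  exact K.prT_ιOrZero_ne (k + 1 - 1) (n - k) j (n - j) n (by omega) _

lemma total_down_acyclic
    (hrows : ∀ j i (z : (K.X j).X i), (K.d j (j - 1)).f i z = 0 →
      ∃ w : (K.X (j + 1)).X i, (K.d (j + 1) j).f i w = z) (n : ℕ) :
    (K.total cℕ).ExactAt n := by
  rw [HomologicalComplex.exactAt_iff' _ (n + 1) n (n - 1) (by simp) (by cases n <;> simp)]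
  rw [ShortComplex.moduleCat_exact_iff]
  intro x hx
  suffices h : ∀ (m : ℕ) (x : (K.total cℕ).X n), (K.total cℕ).d n (n - 1) x = 0 →
      (∀ j, j < n + 1 - m → K.prT j (n - j) n x = 0) →
      ∃ y, (K.total cℕ).d (n + 1) n y = x by
    exact h (n + 1) x hx (fun j hj => absurd hj (by omega))
  intro m
  induction m with
  | zero =>
    intro x hx hvan
    refine ⟨0, ?_⟩
    rw [map_zero]
    conv_rhs => rw [K.total_decomposition n x]
    symm
    apply Finset.sum_eq_zero
    intro j hj
    rw [hvan j (by simpa using hj), map_zero]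
  | succ m ih =>
    intro x hx hvan
    have hkn : n - m ≤ n := by omega
    have hcond : (K.d (n - m) (n - m - 1)).f (n - (n - m)) (K.prT (n - m) (n - (n - m)) n x) = 0 := by
      rcases Nat.eq_zero_or_pos (n - m) with hk0 | hk1
      · rw [hk0]
        have h0 : K.d 0 (0 - 1) = 0 := K.shape _ _ (by simp)
        rw [h0, HomologicalComplex.zero_f]
        rfl
      · exact K.cycle_comp n (n - m) hk1 hkn x hx (hvan (n - m - 1) (by omega))
    obtain ⟨w, hw⟩ := hrows (n - m) (n - (n - m)) _ hcond
    set y₀ := K.ιTotal cℕ (n - m + 1) (n - (n - m)) (n + 1)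
      (show (n - m + 1) + (n - (n - m)) = n + 1 by omega) w with hy₀
    obtain ⟨y', hy'⟩ := ih (x - (K.total cℕ).d (n + 1) n y₀)
      (by
        rw [map_sub, hx]
        have hdd := congrArg (fun f => f y₀) ((K.total cℕ).d_comp_d (n + 1) n (n - 1))
        simp only at hdd
        rw [show ((K.total cℕ).d (n + 1) n ≫ (K.total cℕ).d n (n - 1)) y₀
            = (K.total cℕ).d n (n - 1) ((K.total cℕ).d (n + 1) n y₀) from rfl] at hdd
        rw [show ((0 : (K.total cℕ).X (n+1) ⟶ (K.total cℕ).X (n-1))) y₀ = 0 from rfl] at hdd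
        rw [hdd]
        simp)
      (by
        intro j hj
        rw [map_sub]
        by_cases hjk : j = n - m
        · subst hjk
          rw [hy₀, K.prT_d_ι_self n (n - m) hkn w, hw, sub_self]
        · rw [hy₀, K.prT_d_ι_lt n (n - m) j hkn (by omega) w, hvan j (by omega), sub_zero])
    refine ⟨y' + y₀, ?_⟩
    rw [map_add, hy', sub_add_cancel]

end HomologicalComplex₂

end AuxiliaryLemmas

/-- If all terms of `P` are flat `R`-modules and `Q` is acyclic, then the
total complex (direct sums along the antidiagonals) of the double complex with terms
`P_i ⊗ Q_j`, vertical differential `d_P ⊗ (-1)^j` and horizontal differential `1 ⊗ d_Q`,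
is acyclic.  (With the chosen indexing, the total differential on the summand of
bidegree `(i, j)` is `1 ⊗ d_Q + (-1)^j • (d_P ⊗ 1)`.) -/
theorem tensorBicomplex_total_acyclic (P Q : ChainComplex (ModuleCat.{u} R) ℕ)
    (hflat : ∀ i, Module.Flat R (P.X i))
    (hQ : ∀ n, Q.ExactAt n) :
    ∀ n, ((tensorBicomplex R P Q).total (ComplexShape.down ℕ)).ExactAt n := by
  intro n
  apply HomologicalComplex₂.total_down_acyclic
  intro j i z hz
  haveI := hflat i
  have hQex : (Q.sc' (j + 1) j (j - 1)).Exact := by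
    rw [← HomologicalComplex.exactAt_iff' Q (j + 1) j (j - 1) (by simp) (by cases j <;> simp)]
    exact hQ j
  have hex := Module.Flat.lTensor_shortComplex_exact (P.X i) _ hQex
  rw [ShortComplex.moduleCat_exact_iff] at hex
  exact hex z hz

end
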